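/- Let N > 0 and δ_A, δ_B, β_A, β_B > 0. Both roots of the quadratic λ² + λ(δ_A + δ_B − N(β_A + β_B)) + δ_Aδ_B − N(δ_Bβ_A + δ_Aβ_B) = 0 are real and strictly negative if and only if N(δ_Aβ_B + δ_Bβ_A)/(δ_Aδ_B) < 1. -/
import Mathlib


theorem zero_fixed_point_stability_iff
    (N δA δB βA βB : ℝ) (hN : 0 < N) (hδA : 0 < δA) (hδB : 0 < δB)
    (hβA : 0 < βA) (hβB : 0 < βB) :
    (∀ z : ℂ, z ^ 2 + z * ((δA : ℂ) + δB - N * (βA + βB))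
        + ((δA : ℂ) * δB - N * (δB * βA + δA * βB)) = 0 →
      ∃ r : ℝ, z = (r : ℂ) ∧ r < 0) ↔
    N * (δA * βB + δB * βA) / (δA * δB) < 1 := by
  set b : ℝ := δA + δB - N * (βA + βB) with hb
  set c : ℝ := δA * δB - N * (δB * βA + δA * βB) with hc
  set D : ℝ := b ^ 2 - 4 * c with hD
  have hDpos : 0 < D := by
    have : D = ((δA - N * βA) - (δB - N * βB)) ^ 2 + 4 * (N * βA) * (N * βB) := by
      rw [hD, hb, hc]; ring
    rw [this]
    have h1 : 0 ≤ ((δA - N * βA) - (δB - N * βB)) ^ 2 := sq_nonneg _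
    have h2 : 0 < 4 * (N * βA) * (N * βB) := by positivity
    linarith
  set s : ℝ := Real.sqrt D with hs
  have hs2 : s ^ 2 = D := Real.sq_sqrt hDpos.le
  have hspos : 0 < s := Real.sqrt_pos.mpr hDpos
  set r1 : ℝ := (-b + s) / 2 with hr1
  set r2 : ℝ := (-b - s) / 2 with hr2
  have hsum : r1 + r2 = -b := by rw [hr1, hr2]; ring
  have hprod : r1 * r2 = c := by
    have : r1 * r2 = (b ^ 2 - s ^ 2) / 4 := by rw [hr1, hr2]; ring
    rw [this, hs2, hD]; ring
  have hfact : ∀ z : ℂ, z ^ 2 + z * ((δA : ℂ) + δB - N * (βA + βB))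
        + ((δA : ℂ) * δB - N * (δB * βA + δA * βB)) = (z - r1) * (z - r2) := by
    intro z
    have e1 : ((δA : ℂ) + δB - N * (βA + βB)) = ((b : ℝ) : ℂ) := by
      rw [hb]; push_cast; ring
    have e2 : ((δA : ℂ) * δB - N * (δB * βA + δA * βB)) = ((c : ℝ) : ℂ) := by
      rw [hc]; push_cast; ring
    have e3 : ((r1 : ℝ) : ℂ) + ((r2 : ℝ) : ℂ) = -(b : ℂ) := by
      rw [← Complex.ofReal_add, hsum]; push_cast; ring
    have e4 : ((r1 : ℝ) : ℂ) * ((r2 : ℝ) : ℂ) = (c : ℂ) := by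
      rw [← Complex.ofReal_mul, hprod]
    rw [e1, e2]
    have : (z - r1) * (z - r2) = z ^ 2 - z * ((r1 : ℂ) + r2) + (r1 : ℂ) * r2 := by ring
    rw [this, e3, e4]; ring
  constructor
  · intro h
    have h1 : r1 < 0 := by
      obtain ⟨r, hr, hrneg⟩ := h (r1 : ℂ) (by rw [hfact]; simp)
      have : r1 = r := by exact_mod_cast hr
      linarith
    have h2 : r2 < 0 := by
      obtain ⟨r, hr, hrneg⟩ := h (r2 : ℂ) (by rw [hfact]; simp)
      have : r2 = r := by exact_mod_cast hr
      linarith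
    have hcpos : 0 < c := by rw [← hprod]; exact mul_pos_of_neg_of_neg h1 h2
    rw [div_lt_one (by positivity)]
    rw [hc] at hcpos; linarith
  · intro h
    have hcpos : 0 < c := by
      rw [div_lt_one (by positivity)] at h
      rw [hc]; linarith
    have hA : N * βA < δA := by
      have h1 : N * (δB * βA) < δA * δB := by nlinarith [mul_pos hN hβB, mul_pos hδA hβB]
      nlinarith
    have hB : N * βB < δB := by nlinarith [mul_pos hN hβA]
    have hbpos : 0 < b := by rw [hb]; nlinarith
    have hsb : s < b := by
      have : s ^ 2 < b ^ 2 := by rw [hs2, hD]; linarith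
      nlinarith
    have h1 : r1 < 0 := by rw [hr1]; linarith
    have h2 : r2 < 0 := by rw [hr2]; linarith
    intro z hz
    rw [hfact] at hz
    rcases mul_eq_zero.mp hz with hz1 | hz1
    · exact ⟨r1, by rwa [sub_eq_zero] at hz1, h1⟩
    · exact ⟨r2, by rwa [sub_eq_zero] at hz1, h2⟩
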